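/- arXiv:math/0312081 — 4 statements merged into one kernel-verified Lean document; each statement's English description precedes it below -/
import Mathlib

section
/- Let (E,d) be a complete separable metric space and μ a Borel probability measure on E satisfying the quadratic transportation cost inequality T₂(C). Then μ satisfies (Tronc): for every a > e^{3/2} there exists a constant c(a) > 0 such that for every probability measure ν = h·μ with H(ν,μ) ≤ 1/2 one has W₂²(ν, ν_a) ≤ c(a)·H(ν,μ). -/
/-!
Let `ν = h·μ`, `S = {h ≤ a}` and `m = ν(S)`. Since `x log x ≥ x - 1`, the part of `H(ν,μ)`
carried by `S` is at least `m - 1`, and the part carried by `Sᶜ` is at least `log a · (1 - m)`.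
Together with `H(ν,μ) ≤ 1/2` this gives `m ≥ (2 log a - 3) / (2 log a - 2)`, which is positive
exactly when `a > e^{3/2}`. The truncation has entropy `H(ν_a,μ) = (∫_S h log h dμ) / m - log m`,
and `-m log m ≤ 1 - m ≤ log a · (1 - m) ≤ ∫_{Sᶜ} h log h dμ` bounds it by `H(ν,μ) / m`. Hence
`T₂(C)` bounds both `W₂²(μ,ν)` and `W₂²(μ,ν_a)` by multiples of `H(ν,μ)`, and gluing couplings of
`(μ,ν)` and `(μ,ν_a)` along their common marginal `μ` gives
`W₂²(ν,ν_a) ≤ 2 W₂²(μ,ν) + 2 W₂²(μ,ν_a)`.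
-/

open MeasureTheory ENNReal
open scoped Classical

noncomputable section

/-- `π` is a coupling of the probability measures `μ` and `ν`:
its marginal distributions are `μ` and `ν`. -/
def IsCoupling {E : Type*} [MeasurableSpace E] (π : Measure (E × E)) (μ ν : Measure E) : Prop :=
  π.map Prod.fst = μ ∧ π.map Prod.snd = ν

/-- The `p`-th power of the `L^p` Wasserstein distance, `W_p^p(μ,ν)`, as the infimum of the
transportation cost over all couplings. -/
def Wcost {E : Type*} [MetricSpace E] [MeasurableSpace E] (p : ℝ) (μ ν : Measure E) : ℝ≥0∞ :=
  ⨅ (π : Measure (E × E)) (_ : IsProbabilityMeasure π) (_ : IsCoupling π μ ν),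
    ∫⁻ z, ENNReal.ofReal (dist z.1 z.2 ^ p) ∂π

/-- Relative entropy (Kullback-Leibler information) `H(ν,μ)`:
`∫ log (dν/dμ) dν` if `ν ≪ μ` (and the integral exists), `+∞` otherwise. -/
def relEnt {Ω : Type*} [MeasurableSpace Ω] (ν μ : Measure Ω) : ℝ≥0∞ :=
  if ν ≪ μ ∧ Integrable (fun x => Real.log ((ν.rnDeriv μ) x).toReal) ν
  then ENNReal.ofReal (∫ x, Real.log ((ν.rnDeriv μ) x).toReal ∂ν)
  else ∞

/-- The transportation cost inequality `T_p(C)`: `W_p(μ,ν) ≤ √(2 C H(ν,μ))` for every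
probability measure `ν`. -/
def TCI {E : Type*} [MetricSpace E] [MeasurableSpace E] (p : ℝ) (C : ℝ) (μ : Measure E) : Prop :=
  ∀ ν : Measure E, IsProbabilityMeasure ν →
    Wcost p μ ν ^ (1 / p) ≤ (ENNReal.ofReal (2 * C) * relEnt ν μ) ^ (1 / 2 : ℝ)

/-- The measure `ν = h·μ`. -/
def densMeas {Ω : Type*} [MeasurableSpace Ω] (μ : Measure Ω) (h : Ω → ℝ) : Measure Ω :=
  μ.withDensity fun x => ENNReal.ofReal (h x)

/-- The truncated measure `ν_a = (1/ν(h ≤ a)) · h · 1_{h ≤ a} · μ` for `ν = h·μ`. -/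
def truncMeas {Ω : Type*} [MeasurableSpace Ω] (μ : Measure Ω) (h : Ω → ℝ) (a : ℝ) : Measure Ω :=
  ((densMeas μ h) {x | h x ≤ a})⁻¹ • (densMeas μ h).restrict {x | h x ≤ a}


open ProbabilityTheory

section Gluing

variable {α β γ : Type*} [MeasurableSpace α] [MeasurableSpace β] [MeasurableSpace γ]
  [StandardBorelSpace β] [Nonempty β] [StandardBorelSpace γ] [Nonempty γ]

theorem exists_glued_measure (π₁ : Measure (α × β)) (π₂ : Measure (α × γ))
    [IsProbabilityMeasure π₁] [IsFiniteMeasure π₂] (hfst : π₁.fst = π₂.fst) :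
    ∃ τ : Measure (α × β × γ), IsProbabilityMeasure τ ∧
      τ.map (Prod.map id Prod.fst) = π₁ ∧ τ.map (Prod.map id Prod.snd) = π₂ := by
  refine ⟨π₁.fst ⊗ₘ (π₁.condKernel ×ₖ π₂.condKernel), inferInstance, ?_, ?_⟩
  · rw [← Measure.compProd_map measurable_fst, ← Kernel.fst_eq, Kernel.fst_prod,
      π₁.disintegrate]
  · rw [← Measure.compProd_map measurable_snd, ← Kernel.snd_eq, Kernel.snd_prod, hfst,
      π₂.disintegrate]

end Gluing

theorem dist_sq_le_two_mul_add {E : Type*} [PseudoMetricSpace E] (x y z : E) :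
    dist y z ^ 2 ≤ 2 * dist x y ^ 2 + 2 * dist x z ^ 2 := by
  nlinarith [dist_triangle_left y z x, dist_nonneg (x := x) (y := y),
    dist_nonneg (x := y) (y := z), sq_nonneg (dist x y - dist x z)]

section Wasserstein

variable {E : Type*} [MetricSpace E] [CompleteSpace E] [TopologicalSpace.SeparableSpace E]
  [MeasurableSpace E] [BorelSpace E]

theorem Wcost_two_le_of_couplings {μ ν₁ ν₂ : Measure E} (π₁ π₂ : Measure (E × E))
    [IsProbabilityMeasure π₁] [IsProbabilityMeasure π₂]
    (h₁ : IsCoupling π₁ μ ν₁) (h₂ : IsCoupling π₂ μ ν₂) :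
    Wcost 2 ν₁ ν₂ ≤ 2 * ∫⁻ z, ENNReal.ofReal (dist z.1 z.2 ^ (2 : ℝ)) ∂π₁
      + 2 * ∫⁻ z, ENNReal.ofReal (dist z.1 z.2 ^ (2 : ℝ)) ∂π₂ := by
  have : Nonempty E := nonempty_of_isProbabilityMeasure π₁ |>.map Prod.fst
  obtain ⟨τ, hτ, hτ₁, hτ₂⟩ := exists_glued_measure π₁ π₂ (h₁.1.trans h₂.1.symm)
  have hη : IsCoupling (τ.map Prod.snd) ν₁ ν₂ := by
    constructor
    · rw [Measure.map_map measurable_fst measurable_snd, ← h₁.2, ← hτ₁,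
        Measure.map_map measurable_snd (by fun_prop)]
      rfl
    · rw [Measure.map_map measurable_snd measurable_snd, ← h₂.2, ← hτ₂,
        Measure.map_map measurable_snd (by fun_prop)]
      rfl
  calc Wcost 2 ν₁ ν₂
      ≤ ∫⁻ z, ENNReal.ofReal (dist z.1 z.2 ^ (2 : ℝ)) ∂(τ.map Prod.snd) :=
        iInf₂_le_of_le _ (Measure.isProbabilityMeasure_map measurable_snd.aemeasurable)
          (iInf_le _ hη)
    _ = ∫⁻ p, ENNReal.ofReal (dist p.2.1 p.2.2 ^ (2 : ℝ)) ∂τ :=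
        lintegral_map (by fun_prop) measurable_snd
    _ ≤ ∫⁻ p, (2 * ENNReal.ofReal (dist p.1 p.2.1 ^ (2 : ℝ))
          + 2 * ENNReal.ofReal (dist p.1 p.2.2 ^ (2 : ℝ))) ∂τ := by
        refine lintegral_mono fun p => ?_
        simp only [Real.rpow_two]
        rw [← ENNReal.ofReal_ofNat 2, ← ENNReal.ofReal_mul zero_le_two,
          ← ENNReal.ofReal_mul zero_le_two, ← ENNReal.ofReal_add (by positivity) (by positivity)]
        exact ENNReal.ofReal_le_ofReal (dist_sq_le_two_mul_add _ _ _)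
    _ = _ := by
        rw [lintegral_add_left (by fun_prop), lintegral_const_mul _ (by fun_prop),
          lintegral_const_mul _ (by fun_prop), ← hτ₁, ← hτ₂,
          lintegral_map (by fun_prop) (by fun_prop), lintegral_map (by fun_prop) (by fun_prop)]
        rfl

theorem Wcost_two_le_two_mul_add (μ : Measure E) {ν₁ ν₂ : Measure E} :
    Wcost 2 ν₁ ν₂ ≤ 2 * Wcost 2 μ ν₁ + 2 * Wcost 2 μ ν₂ := by
  simp only [Wcost, ENNReal.mul_iInf_of_ne two_ne_zero ofNat_ne_top, ENNReal.iInf_add,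
    ENNReal.add_iInf]
  exact le_iInf₂ fun π₂ _ => le_iInf fun h₂ => le_iInf₂ fun π₁ _ => le_iInf fun h₁ =>
    Wcost_two_le_of_couplings π₁ π₂ h₁ h₂

end Wasserstein

theorem two_mul_sub_three_div_le {la A B m : ℝ} (hla : 3 / 2 < la) (hA : m - 1 ≤ A)
    (hB : la * (1 - m) ≤ B) (hAB : A + B ≤ 1 / 2) : (2 * la - 3) / (2 * la - 2) ≤ m := by
  rw [div_le_iff₀ (by linarith)]
  nlinarith

theorem div_sub_log_le_add_div {la A B m : ℝ} (hla : 1 ≤ la) (hm0 : 0 < m) (hm1 : m ≤ 1)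
    (hB : la * (1 - m) ≤ B) : A / m - Real.log m ≤ (A + B) / m := by
  have hlog : -(m * Real.log m) ≤ 1 - m := by
    simpa [Real.negMulLog] using Real.negMulLog_le_one_sub_self hm0.le
  rw [div_sub' hm0.ne']
  gcongr
  nlinarith

theorem ofReal_div_le_ofReal_inv_mul {x m c : ℝ} (hc : 0 < c) (hcm : c ≤ m) :
    ENNReal.ofReal (x / m) ≤ ENNReal.ofReal c⁻¹ * ENNReal.ofReal x := by
  rcases le_total 0 x with hx | hx
  · rw [← ENNReal.ofReal_mul (inv_nonneg.2 hc.le), div_eq_inv_mul]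
    gcongr
  · rw [ENNReal.ofReal_of_nonpos (div_nonpos_of_nonpos_of_nonneg hx (hc.le.trans hcm))]
    exact zero_le

theorem indicator_mul_log_indicator {Ω : Type*} {h : Ω → ℝ} {s : Set Ω} {c : ℝ} (hc : c ≠ 0)
    (x : Ω) :
    s.indicator (fun x => c * h x) x * Real.log (s.indicator (fun x => c * h x) x)
      = s.indicator (fun x => c * (h x * Real.log (h x) + Real.log c * h x)) x := by
  by_cases hx : x ∈ s
  · simp only [Set.indicator_of_mem hx]
    rcases eq_or_ne (h x) 0 with h0 | h0
    · simp [h0]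
    · rw [Real.log_mul hc h0]
      ring
  · simp [Set.indicator_of_notMem hx]

section Density

variable {Ω : Type*} [MeasurableSpace Ω] {μ : Measure Ω} {h : Ω → ℝ}

theorem integral_densMeas (hm : Measurable h) (hpos : ∀ x, 0 ≤ h x) (ψ : Ω → ℝ) :
    ∫ x, ψ x ∂(densMeas μ h) = ∫ x, h x * ψ x ∂μ := by
  rw [densMeas, integral_withDensity_eq_integral_toReal_smul₀ (by fun_prop)
    (.of_forall fun _ => ofReal_lt_top)]
  simp [ENNReal.toReal_ofReal (hpos _)]

theorem integrable_densMeas_iff (hm : Measurable h) (hpos : ∀ x, 0 ≤ h x) (ψ : Ω → ℝ) :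
    Integrable ψ (densMeas μ h) ↔ Integrable (fun x => h x * ψ x) μ := by
  rw [densMeas, integrable_withDensity_iff_integrable_smul' (by fun_prop)
    (.of_forall fun _ => ofReal_lt_top)]
  simp [ENNReal.toReal_ofReal (hpos _)]

theorem measureReal_densMeas (hm : Measurable h) (hpos : ∀ x, 0 ≤ h x) {s : Set Ω}
    (hs : MeasurableSet s) : (densMeas μ h).real s = ∫ x in s, h x ∂μ := by
  have : (densMeas μ h).restrict s = densMeas (μ.restrict s) h := restrict_withDensity hs _
  rw [← setIntegral_one_eq_measureReal, this, integral_densMeas hm hpos]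
  simp

theorem integrable_of_isFiniteMeasure_densMeas [IsFiniteMeasure (densMeas μ h)]
    (hm : Measurable h) (hpos : ∀ x, 0 ≤ h x) : Integrable h μ := by
  simpa using (integrable_densMeas_iff hm hpos fun _ => (1 : ℝ)).1 (integrable_const 1)

theorem relEnt_densMeas [SigmaFinite μ] (hm : Measurable h) (hpos : ∀ x, 0 ≤ h x) :
    relEnt (densMeas μ h) μ =
      if Integrable (fun x => h x * Real.log (h x)) μ
      then ENNReal.ofReal (∫ x, h x * Real.log (h x) ∂μ) else ∞ := by
  have habs : densMeas μ h ≪ μ := withDensity_absolutelyContinuous _ _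
  have hlog : (fun x => Real.log ((densMeas μ h).rnDeriv μ x).toReal)
      =ᵐ[densMeas μ h] fun x => Real.log (h x) := by
    have hrn : (densMeas μ h).rnDeriv μ =ᵐ[μ] fun x => ENNReal.ofReal (h x) :=
      Measure.rnDeriv_withDensity μ hm.ennreal_ofReal
    filter_upwards [habs.ae_le hrn] with x hx
    rw [hx, ENNReal.toReal_ofReal (hpos x)]
  simp only [relEnt, habs, true_and, integrable_congr hlog, integral_congr_ae hlog,
    integrable_densMeas_iff hm hpos, integral_densMeas hm hpos]

theorem truncMeas_eq_densMeas {a : ℝ} (hm : Measurable h)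
    (h0 : densMeas μ h {x | h x ≤ a} ≠ 0) (htop : densMeas μ h {x | h x ≤ a} ≠ ∞) :
    truncMeas μ h a = densMeas μ ({x | h x ≤ a}.indicator
      fun x => ((densMeas μ h).real {x | h x ≤ a})⁻¹ * h x) := by
  have hS : MeasurableSet {x | h x ≤ a} := measurableSet_le hm measurable_const
  have hrestrict : (densMeas μ h).restrict {x | h x ≤ a}
      = μ.withDensity ({x | h x ≤ a}.indicator fun x => ENNReal.ofReal (h x)) := by
    rw [densMeas, restrict_withDensity hS, withDensity_indicator hS]
  rw [truncMeas, hrestrict, ← withDensity_smul' _ _ (ENNReal.inv_ne_top.2 h0)]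
  refine congrArg μ.withDensity (funext fun x => ?_)
  by_cases hx : x ∈ {x | h x ≤ a}
  · simp only [Set.indicator_of_mem hx, Pi.smul_apply, smul_eq_mul]
    rw [ENNReal.ofReal_mul (inv_nonneg.2 measureReal_nonneg), measureReal_def,
      ENNReal.ofReal_inv_of_pos (ENNReal.toReal_pos h0 htop), ENNReal.ofReal_toReal htop]
  · simp [Set.indicator_of_notMem hx]

theorem isProbabilityMeasure_truncMeas {a : ℝ} [IsFiniteMeasure (densMeas μ h)]
    (h0 : densMeas μ h {x | h x ≤ a} ≠ 0) : IsProbabilityMeasure (truncMeas μ h a) := by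
  constructor
  rw [truncMeas, Measure.smul_apply, Measure.restrict_apply_univ, smul_eq_mul,
    ENNReal.inv_mul_cancel h0 (measure_ne_top _ _)]

theorem relEnt_truncMeas [SigmaFinite μ] [IsFiniteMeasure (densMeas μ h)] {a : ℝ}
    (hm : Measurable h) (hpos : ∀ x, 0 ≤ h x) (h0 : densMeas μ h {x | h x ≤ a} ≠ 0)
    (hint : Integrable (fun x => h x * Real.log (h x)) μ) :
    relEnt (truncMeas μ h a) μ = ENNReal.ofReal
      ((∫ x in {x | h x ≤ a}, h x * Real.log (h x) ∂μ) / (densMeas μ h).real {x | h x ≤ a}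
        - Real.log ((densMeas μ h).real {x | h x ≤ a})) := by
  have hS : MeasurableSet {x | h x ≤ a} := measurableSet_le hm measurable_const
  set m := (densMeas μ h).real {x | h x ≤ a} with hm_def
  have hm0 : 0 < m := ENNReal.toReal_pos h0 (measure_ne_top _ _)
  have hinth := integrable_of_isFiniteMeasure_densMeas (μ := μ) hm hpos
  have hint' : Integrable (fun x => m⁻¹ * (h x * Real.log (h x) + Real.log m⁻¹ * h x))
      (μ.restrict {x | h x ≤ a}) :=
    (hint.restrict.add (hinth.restrict.const_mul _)).const_mul _
  rw [truncMeas_eq_densMeas hm h0 (measure_ne_top _ _),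
    relEnt_densMeas ((hm.const_mul _).indicator hS)
      fun x => Set.indicator_nonneg (fun x _ => mul_nonneg (inv_nonneg.2 hm0.le) (hpos x)) x]
  simp_rw [indicator_mul_log_indicator (inv_ne_zero hm0.ne')]
  rw [if_pos ((integrable_indicator_iff hS).2 hint'), integral_indicator hS, integral_const_mul,
    integral_add hint.restrict (hinth.restrict.const_mul _), integral_const_mul,
    ← measureReal_densMeas hm hpos hS, ← hm_def, Real.log_inv]
  congr 1
  field_simp
  ring

theorem measureReal_sub_le_setIntegral_mul_log [IsFiniteMeasure μ]
    [IsFiniteMeasure (densMeas μ h)] (hm : Measurable h) (hpos : ∀ x, 0 ≤ h x)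
    (hint : Integrable (fun x => h x * Real.log (h x)) μ) {s : Set Ω} (hs : MeasurableSet s) :
    (densMeas μ h).real s - μ.real s ≤ ∫ x in s, h x * Real.log (h x) ∂μ := by
  have hinth := integrable_of_isFiniteMeasure_densMeas (μ := μ) hm hpos
  calc (densMeas μ h).real s - μ.real s = ∫ x in s, (h x - 1) ∂μ := by
        rw [integral_sub hinth.integrableOn (integrable_const 1), measureReal_densMeas hm hpos hs,
          setIntegral_const, smul_eq_mul, mul_one]
    _ ≤ ∫ x in s, h x * Real.log (h x) ∂μ :=
        setIntegral_mono (hinth.integrableOn.sub (integrable_const 1)) hint.integrableOn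
          fun x => Real.self_sub_one_le_mul_log (hpos x)

theorem log_mul_measureReal_compl_le [IsProbabilityMeasure (densMeas μ h)] {a : ℝ}
    (hm : Measurable h) (hpos : ∀ x, 0 ≤ h x)
    (hint : Integrable (fun x => h x * Real.log (h x)) μ) (ha : 0 < a) :
    Real.log a * (1 - (densMeas μ h).real {x | h x ≤ a})
      ≤ ∫ x in {x | h x ≤ a}ᶜ, h x * Real.log (h x) ∂μ := by
  have hS : MeasurableSet {x | h x ≤ a} := measurableSet_le hm measurable_const
  have hinth := integrable_of_isFiniteMeasure_densMeas (μ := μ) hm hpos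
  calc Real.log a * (1 - (densMeas μ h).real {x | h x ≤ a})
      = ∫ x in {x | h x ≤ a}ᶜ, h x * Real.log a ∂μ := by
        rw [← probReal_compl_eq_one_sub hS, integral_mul_const,
          measureReal_densMeas hm hpos hS.compl, mul_comm]
    _ ≤ ∫ x in {x | h x ≤ a}ᶜ, h x * Real.log (h x) ∂μ :=
        setIntegral_mono_on (hinth.integrableOn.mul_const _) hint.integrableOn hS.compl
          fun x hx => mul_le_mul_of_nonneg_left (Real.log_le_log ha (le_of_not_ge hx)) (hpos x)

end Density

section Truncation

variable {Ω : Type*} [MeasurableSpace Ω] {μ : Measure Ω} {h : Ω → ℝ} {a : ℝ}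

theorem integrable_mul_log_of_relEnt_densMeas_ne_top [SigmaFinite μ] (hm : Measurable h)
    (hpos : ∀ x, 0 ≤ h x) (hH : relEnt (densMeas μ h) μ ≠ ∞) :
    Integrable (fun x => h x * Real.log (h x)) μ := by
  by_contra hint
  rw [relEnt_densMeas hm hpos, if_neg hint] at hH
  exact hH rfl

theorem le_measureReal_truncSet [IsProbabilityMeasure μ] [IsProbabilityMeasure (densMeas μ h)]
    (hm : Measurable h) (hpos : ∀ x, 0 ≤ h x) (ha : Real.exp (3 / 2) < a)
    (hH : relEnt (densMeas μ h) μ ≤ 1 / 2) :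
    (2 * Real.log a - 3) / (2 * Real.log a - 2) ≤ (densMeas μ h).real {x | h x ≤ a} := by
  have ha0 : 0 < a := (Real.exp_pos _).trans ha
  have hS : MeasurableSet {x | h x ≤ a} := measurableSet_le hm measurable_const
  have hint :=
    integrable_mul_log_of_relEnt_densMeas_ne_top hm hpos (ne_top_of_le_ne_top (by simp) hH)
  rw [relEnt_densMeas hm hpos, if_pos hint, ← integral_add_compl hS hint,
    ENNReal.ofReal_le_iff_le_toReal (by simp)] at hH
  refine two_mul_sub_three_div_le ((Real.lt_log_iff_exp_lt ha0).2 ha) ?_ ?_ (by simpa using hH)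
  · exact (measureReal_sub_le_setIntegral_mul_log hm hpos hint hS).trans'
      (by gcongr; exact measureReal_le_one)
  · exact log_mul_measureReal_compl_le hm hpos hint ha0

theorem densMeas_truncSet_ne_zero [IsProbabilityMeasure μ]
    [IsProbabilityMeasure (densMeas μ h)] (hm : Measurable h) (hpos : ∀ x, 0 ≤ h x)
    (ha : Real.exp (3 / 2) < a) (hH : relEnt (densMeas μ h) μ ≤ 1 / 2) :
    densMeas μ h {x | h x ≤ a} ≠ 0 := by
  have hla : 3 / 2 < Real.log a := (Real.lt_log_iff_exp_lt ((Real.exp_pos _).trans ha)).2 ha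
  have hm0 :=
    (div_pos (by linarith) (by linarith)).trans_le (le_measureReal_truncSet hm hpos ha hH)
  exact fun h0 => by simp [measureReal_def, h0] at hm0

theorem relEnt_truncMeas_le [IsProbabilityMeasure μ] [IsProbabilityMeasure (densMeas μ h)]
    (hm : Measurable h) (hpos : ∀ x, 0 ≤ h x) (ha : Real.exp (3 / 2) < a)
    (hH : relEnt (densMeas μ h) μ ≤ 1 / 2) :
    relEnt (truncMeas μ h a) μ ≤
      ENNReal.ofReal ((2 * Real.log a - 3) / (2 * Real.log a - 2))⁻¹
        * relEnt (densMeas μ h) μ := by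
  have ha0 : 0 < a := (Real.exp_pos _).trans ha
  have hla : 3 / 2 < Real.log a := (Real.lt_log_iff_exp_lt ha0).2 ha
  have hS : MeasurableSet {x | h x ≤ a} := measurableSet_le hm measurable_const
  have hint :=
    integrable_mul_log_of_relEnt_densMeas_ne_top hm hpos (ne_top_of_le_ne_top (by simp) hH)
  have h0 := densMeas_truncSet_ne_zero hm hpos ha hH
  have hmass := le_measureReal_truncSet hm hpos ha hH
  have hB := log_mul_measureReal_compl_le hm hpos hint ha0
  rw [relEnt_truncMeas hm hpos h0 hint, relEnt_densMeas hm hpos, if_pos hint,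
    ← integral_add_compl hS hint]
  exact (ENNReal.ofReal_le_ofReal (div_sub_log_le_add_div (by linarith)
    (ENNReal.toReal_pos h0 (measure_ne_top _ _)) measureReal_le_one hB)).trans
    (ofReal_div_le_ofReal_inv_mul (div_pos (by linarith) (by linarith)) hmass)

end Truncation

theorem TCI.Wcost_two_le {E : Type*} [MetricSpace E] [MeasurableSpace E] {C : ℝ}
    {μ : Measure E} (hT : TCI 2 C μ) (ν : Measure E) [IsProbabilityMeasure ν] :
    Wcost 2 μ ν ≤ ENNReal.ofReal (2 * C) * relEnt ν μ := by
  simpa [ENNReal.rpow_le_rpow_iff] using hT ν inferInstance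

/-- `T₂(C)` implies the truncation property (Tronc). -/
theorem t2_implies_tronc
    {E : Type*} [MetricSpace E] [CompleteSpace E] [TopologicalSpace.SeparableSpace E]
    [MeasurableSpace E] [BorelSpace E]
    (μ : Measure E) (hprob : IsProbabilityMeasure μ)
    (C : ℝ) (hC : 0 < C) (hT2 : TCI 2 C μ) :
    ∀ a > Real.exp (3 / 2), ∃ c > (0 : ℝ),
      ∀ h : E → ℝ, Measurable h → (∀ x, 0 ≤ h x) →
        IsProbabilityMeasure (densMeas μ h) → relEnt (densMeas μ h) μ ≤ 1 / 2 →
          Wcost 2 (densMeas μ h) (truncMeas μ h a) ≤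
            ENNReal.ofReal c * relEnt (densMeas μ h) μ := by
  intro a ha
  set K := ((2 * Real.log a - 3) / (2 * Real.log a - 2))⁻¹
  have hK : 0 ≤ K := by
    have : 3 / 2 < Real.log a := (Real.lt_log_iff_exp_lt ((Real.exp_pos _).trans ha)).2 ha
    exact inv_nonneg.2 (div_nonneg (by linarith) (by linarith))
  refine ⟨4 * C * (1 + K), by positivity, fun h hm hpos hν hH => ?_⟩
  have := isProbabilityMeasure_truncMeas (densMeas_truncSet_ne_zero hm hpos ha hH)
  calc Wcost 2 (densMeas μ h) (truncMeas μ h a)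
      ≤ 2 * Wcost 2 μ (densMeas μ h) + 2 * Wcost 2 μ (truncMeas μ h a) :=
        Wcost_two_le_two_mul_add μ
    _ ≤ 2 * (ENNReal.ofReal (2 * C) * relEnt (densMeas μ h) μ)
        + 2 * (ENNReal.ofReal (2 * C) * (ENNReal.ofReal K * relEnt (densMeas μ h) μ)) := by
        gcongr
        · exact hT2.Wcost_two_le _
        · exact (hT2.Wcost_two_le _).trans (by gcongr; exact relEnt_truncMeas_le hm hpos ha hH)
    _ = ENNReal.ofReal (4 * C * (1 + K)) * relEnt (densMeas μ h) μ := by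
        rw [ENNReal.ofReal_mul (by positivity), ENNReal.ofReal_mul (by positivity),
          ENNReal.ofReal_mul (by positivity), ENNReal.ofReal_add zero_le_one hK]
        simp only [ENNReal.ofReal_ofNat, ENNReal.ofReal_one]
        ring
end
end

section
/- Let (E,d) be a complete separable metric space and μ a Borel probability measure on E such that ∫ exp(ε·d(x,x₀)²) dμ(x) < ∞ for some ε > 0 and x₀ ∈ E. Let a > e^{3/2} and suppose the (Var-Ent) property holds at a: there is a constant D(a) such that ∫ d(x,x₀)²·1_{h > a}(x) dν(x) ≤ D(a)·H(ν,μ) for every probability measure ν = h·μ with H(ν,μ) ≤ 1/2. Then the (Tronc) property holds at a: there exists a constant C' such that W₂²(ν, ν_a) ≤ C'·H(ν,μ) for every probability measure ν = h·μ with H(ν,μ) ≤ 1/2. -/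
open MeasureTheory ENNReal
open scoped Classical

noncomputable section

lemma aux_ent_pt {t : ℝ} (ht : 0 ≤ t) : 0 ≤ t * Real.log t - t + 1 := by
  rcases eq_or_lt_of_le ht with h0 | h0
  · simp [← h0]
  · have h1 := Real.log_le_sub_one_of_pos (inv_pos.mpr h0)
    rw [Real.log_inv] at h1
    have h2 : 1 - t⁻¹ ≤ Real.log t := by linarith
    nlinarith [mul_le_mul_of_nonneg_left h2 h0.le, mul_inv_cancel₀ h0.ne']

lemma aux_compl_bound {E : Type*} [MetricSpace E]
    [MeasurableSpace E] [BorelSpace E]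
    (μ : Measure E) (hprob : IsProbabilityMeasure μ)
    (a : ℝ) (ha0 : 0 < a) (L : ℝ) (hLdef : L = Real.log a - 1) (hL : 1/2 < L)
    (h : E → ℝ) (hm : Measurable h) (hpos : ∀ x, 0 ≤ h x)
    (hν : IsProbabilityMeasure (densMeas μ h)) (hrel : relEnt (densMeas μ h) μ ≤ 1 / 2) :
    densMeas μ h {x | h x ≤ a}ᶜ ≤ ENNReal.ofReal L⁻¹ * relEnt (densMeas μ h) μ := by
  set ν := densMeas μ h with hνdef0
  have hνdef : ν = μ.withDensity fun x => ENNReal.ofReal (h x) := rfl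
  set s : Set E := {x | h x ≤ a} with hsdef
  have hs : MeasurableSet s := measurableSet_le hm measurable_const
  have hLpos : 0 < L := by linarith
  have hcond : ν ≪ μ ∧ Integrable (fun x => Real.log ((ν.rnDeriv μ) x).toReal) ν := by
    by_contra hc'
    rw [relEnt, if_neg hc'] at hrel
    simp at hrel
  obtain ⟨habs, hint0⟩ := hcond
  have hRE : relEnt ν μ = ENNReal.ofReal (∫ x, Real.log ((ν.rnDeriv μ) x).toReal ∂ν) := by
    rw [relEnt, if_pos ⟨habs, hint0⟩]
  have hmν : Measurable fun x => ENNReal.ofReal (h x) := hm.ennreal_ofReal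
  have hrnd : ν.rnDeriv μ =ᵐ[μ] fun x => ENNReal.ofReal (h x) :=
    Measure.rnDeriv_withDensity μ hmν
  have hrndν : (fun x => Real.log ((ν.rnDeriv μ) x).toReal) =ᵐ[ν] fun x => Real.log (h x) := by
    filter_upwards [hrnd.filter_mono habs.ae_le] with x hx
    rw [hx, ENNReal.toReal_ofReal (hpos x)]
  set HR := ∫ x, Real.log (h x) ∂ν with hHRdef
  have hHR : relEnt ν μ = ENNReal.ofReal HR := by
    rw [hRE, integral_congr_ae hrndν]
  have hint : Integrable (fun x => Real.log (h x)) ν := hint0.congr hrndν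
  have hf : Measurable fun x => Real.toNNReal (h x) := hm.real_toNNReal
  have hν2 : ν = μ.withDensity fun x => ((h x).toNNReal : ℝ≥0∞) := rfl
  have key : ∀ g : E → ℝ, ∫ x, g x ∂ν = ∫ x, h x * g x ∂μ := by
    intro g
    rw [hν2, integral_withDensity_eq_integral_smul hf g]
    refine integral_congr_ae (Filter.Eventually.of_forall fun x => ?_)
    simp [NNReal.smul_def, Real.coe_toNNReal _ (hpos x)]
  have keyInt : ∀ g : E → ℝ, Integrable g ν ↔ Integrable (fun x => h x * g x) μ := by
    intro g
    rw [hν2, integrable_withDensity_iff_integrable_smul hf]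
    exact integrable_congr (Filter.Eventually.of_forall fun x => by
      simp [NNReal.smul_def, Real.coe_toNNReal _ (hpos x)])
  have hInt_h : Integrable h μ := by
    have h1 : Integrable (fun _ => (1:ℝ)) ν := integrable_const 1
    have := (keyInt fun _ => 1).mp h1
    simpa using this
  have hInt_hlog : Integrable (fun x => h x * Real.log (h x)) μ := (keyInt _).mp hint
  have hinth1 : ∫ x, h x ∂μ = 1 := by
    have h1 : ENNReal.ofReal (∫ x, h x ∂μ) = ∫⁻ x, ENNReal.ofReal (h x) ∂μ :=
      ofReal_integral_eq_lintegral_ofReal hInt_h (Filter.Eventually.of_forall hpos)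
    have h2 : ∫⁻ x, ENNReal.ofReal (h x) ∂μ = 1 := by
      have := hν.measure_univ
      rwa [hνdef, withDensity_apply _ MeasurableSet.univ, Measure.restrict_univ] at this
    have h3 : (0:ℝ) ≤ ∫ x, h x ∂μ := integral_nonneg hpos
    rw [h2] at h1
    have := congrArg ENNReal.toReal h1
    rwa [ENNReal.toReal_ofReal h3, ENNReal.toReal_one] at this
  set F : E → ℝ := fun x => h x * Real.log (h x) - h x + 1 with hFdef
  have hF1 : Integrable (fun x => h x * Real.log (h x) - h x) μ := hInt_hlog.sub hInt_h
  have hFint : Integrable F μ := hF1.add (integrable_const 1)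
  have hFnn : ∀ x, 0 ≤ F x := fun x => aux_ent_pt (hpos x)
  have hHRF : HR = ∫ x, F x ∂μ := by
    rw [hHRdef, key fun x => Real.log (h x), hFdef]
    rw [integral_add hF1 (integrable_const 1), integral_sub hInt_hlog hInt_h, hinth1]
    simp
  set I := ∫ x in sᶜ, h x ∂μ with hIdef
  have hLI : L * I ≤ HR := by
    have h1 : ∫ x in sᶜ, L * h x ∂μ ≤ ∫ x in sᶜ, F x ∂μ := by
      apply setIntegral_mono_on ((hInt_h.const_mul L).integrableOn) hFint.integrableOn hs.compl
      intro x hx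
      have hax : a < h x := by simpa [hsdef, Set.mem_compl_iff, not_le] using hx
      have hxpos : 0 < h x := lt_trans ha0 hax
      have hlog : Real.log a ≤ Real.log (h x) := Real.log_le_log ha0 hax.le
      have hmm := mul_le_mul_of_nonneg_left hlog (hpos x)
      simp only [hFdef, hLdef]
      nlinarith [hpos x]
    have h2 : ∫ x in sᶜ, F x ∂μ ≤ ∫ x, F x ∂μ :=
      setIntegral_le_integral hFint (Filter.Eventually.of_forall hFnn)
    calc L * I = ∫ x in sᶜ, L * h x ∂μ := by rw [hIdef, integral_const_mul]
      _ ≤ ∫ x in sᶜ, F x ∂μ := h1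
      _ ≤ ∫ x, F x ∂μ := h2
      _ = HR := hHRF.symm
  have hνsc : ν sᶜ = ENNReal.ofReal I := by
    rw [hνdef, withDensity_apply _ hs.compl, hIdef,
      ← ofReal_integral_eq_lintegral_ofReal hInt_h.integrableOn
        (Filter.Eventually.of_forall hpos)]
  rw [hνsc, hHR, ← ENNReal.ofReal_mul (by positivity : (0:ℝ) ≤ L⁻¹)]
  apply ENNReal.ofReal_le_ofReal
  calc I = L⁻¹ * (L * I) := by field_simp
    _ ≤ L⁻¹ * HR := mul_le_mul_of_nonneg_left hLI (by positivity)

/-- Under `EI_ε(2)`, the (Var-Ent) property implies the (Tronc) property. -/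
theorem varent_implies_tronc
    {E : Type*} [MetricSpace E] [CompleteSpace E] [TopologicalSpace.SeparableSpace E]
    [MeasurableSpace E] [BorelSpace E]
    (μ : Measure E) (hprob : IsProbabilityMeasure μ)
    (ε : ℝ) (hε : 0 < ε) (x₀ : E)
    (hEI : Integrable (fun x => Real.exp (ε * dist x x₀ ^ 2)) μ)
    (a : ℝ) (ha : a > Real.exp (3 / 2)) (D : ℝ)
    (hVarEnt : ∀ h : E → ℝ, Measurable h → (∀ x, 0 ≤ h x) →
      IsProbabilityMeasure (densMeas μ h) → relEnt (densMeas μ h) μ ≤ 1 / 2 →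
        ∫⁻ x in {x | a < h x}, ENNReal.ofReal (dist x x₀ ^ 2) ∂(densMeas μ h) ≤
          ENNReal.ofReal D * relEnt (densMeas μ h) μ) :
    ∃ C' : ℝ, ∀ h : E → ℝ, Measurable h → (∀ x, 0 ≤ h x) →
      IsProbabilityMeasure (densMeas μ h) → relEnt (densMeas μ h) μ ≤ 1 / 2 →
        Wcost 2 (densMeas μ h) (truncMeas μ h a) ≤
          ENNReal.ofReal C' * relEnt (densMeas μ h) μ := by
  -- second moment of μ
  set M := ∫⁻ x, ENNReal.ofReal (dist x x₀ ^ 2) ∂μ with hMdef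
  have hMf : M < ∞ := by
    have hb : ∀ x : E, ENNReal.ofReal (dist x x₀ ^ 2) ≤
        ENNReal.ofReal (ε⁻¹ * Real.exp (ε * dist x x₀ ^ 2)) := by
      intro x
      apply ENNReal.ofReal_le_ofReal
      have h1 : ε * dist x x₀ ^ 2 ≤ Real.exp (ε * dist x x₀ ^ 2) := by
        have := Real.add_one_le_exp (ε * dist x x₀ ^ 2); linarith
      calc dist x x₀ ^ 2 = ε⁻¹ * (ε * dist x x₀ ^ 2) := by field_simp
        _ ≤ ε⁻¹ * Real.exp (ε * dist x x₀ ^ 2) :=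
            mul_le_mul_of_nonneg_left h1 (by positivity)
    calc M ≤ ∫⁻ x, ENNReal.ofReal (ε⁻¹ * Real.exp (ε * dist x x₀ ^ 2)) ∂μ := lintegral_mono hb
      _ = ENNReal.ofReal ε⁻¹ * ∫⁻ x, ENNReal.ofReal (Real.exp (ε * dist x x₀ ^ 2)) ∂μ := by
          simp_rw [ENNReal.ofReal_mul (by positivity : (0:ℝ) ≤ ε⁻¹)]
          rw [lintegral_const_mul' _ _ ENNReal.ofReal_ne_top]
      _ < ∞ := ENNReal.mul_lt_top ENNReal.ofReal_lt_top hEI.lintegral_lt_top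
  -- constants
  have ha0 : 0 < a := lt_trans (Real.exp_pos _) ha
  set L : ℝ := Real.log a - 1 with hLdef
  have hL : 1/2 < L := by
    have := (Real.lt_log_iff_exp_lt ha0).mpr ha
    rw [hLdef]; linarith
  have hLpos : 0 < L := by linarith
  set β₀ : ℝ := 1 - L⁻¹ / 2 with hβ₀def
  have hβ₀pos : 0 < β₀ := by
    have h2 : L⁻¹ < 2 := by
      rw [inv_lt_iff_one_lt_mul₀ hLpos] ; linarith
    rw [hβ₀def]; linarith
  set c : ℝ≥0∞ := 2 * ENNReal.ofReal D +
    2 * ENNReal.ofReal L⁻¹ * ENNReal.ofReal β₀⁻¹ * ENNReal.ofReal a * M with hcdef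
  have hc : c ≠ ∞ := by
    rw [hcdef]
    refine ENNReal.add_ne_top.mpr ⟨?_, ?_⟩
    · exact ENNReal.mul_ne_top (by norm_num) ENNReal.ofReal_ne_top
    · exact ENNReal.mul_ne_top (ENNReal.mul_ne_top (ENNReal.mul_ne_top
        (ENNReal.mul_ne_top (by norm_num) ENNReal.ofReal_ne_top) ENNReal.ofReal_ne_top)
        ENNReal.ofReal_ne_top) hMf.ne
  refine ⟨c.toReal, fun h hm hpos hν hrel => ?_⟩
  haveI := hν
  set ν := densMeas μ h with hνdef0
  have hνdef : ν = μ.withDensity fun x => ENNReal.ofReal (h x) := rfl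
  set s : Set E := {x | h x ≤ a} with hsdef
  have hs : MeasurableSet s := measurableSet_le hm measurable_const
  have hsc : sᶜ = {x | a < h x} := by ext x; simp [hsdef, not_le]
  have hmν : Measurable fun x => ENNReal.ofReal (h x) := hm.ennreal_ofReal
  -- complement mass bound
  have hνscle : ν sᶜ ≤ ENNReal.ofReal L⁻¹ * relEnt ν μ :=
    aux_compl_bound μ hprob a ha0 L hLdef hL h hm hpos hν hrel
  have h12 : (1/2 : ℝ≥0∞) = ENNReal.ofReal (1/2 : ℝ) := by
    rw [ENNReal.ofReal_div_of_pos (by norm_num)]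
    norm_num
  have hνscle2 : ν sᶜ ≤ ENNReal.ofReal (L⁻¹ / 2) := by
    refine le_trans hνscle ?_
    calc ENNReal.ofReal L⁻¹ * relEnt ν μ ≤ ENNReal.ofReal L⁻¹ * (1/2) :=
          mul_le_mul' le_rfl hrel
      _ = ENNReal.ofReal (L⁻¹ / 2) := by
          rw [h12, ← ENNReal.ofReal_mul (by positivity : (0:ℝ) ≤ L⁻¹), mul_one_div]
  have hβs : ν s + ν sᶜ = 1 := by
    rw [measure_add_measure_compl hs]; exact hν.measure_univ
  have hβ₀le : ENNReal.ofReal β₀ ≤ ν s := by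
    have hh : ENNReal.ofReal β₀ + ENNReal.ofReal (L⁻¹/2) = 1 := by
      rw [← ENNReal.ofReal_add hβ₀pos.le (by positivity)]
      rw [hβ₀def]
      norm_num
    have h2 : ENNReal.ofReal β₀ + ENNReal.ofReal (L⁻¹/2) ≤ ν s + ENNReal.ofReal (L⁻¹/2) := by
      rw [hh, ← hβs]
      exact add_le_add le_rfl hνscle2
    exact (ENNReal.add_le_add_iff_right ENNReal.ofReal_ne_top).mp h2
  have hβ0 : ν s ≠ 0 := by
    intro h0
    rw [h0] at hβ₀le
    simp only [nonpos_iff_eq_zero, ENNReal.ofReal_eq_zero] at hβ₀le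
    linarith
  have hβtop : ν s ≠ ∞ := measure_ne_top ν s
  -- the truncated measure
  set νa := truncMeas μ h a with hνadef0
  have hνadef : νa = (ν s)⁻¹ • ν.restrict s := rfl
  have hνa_prob : IsProbabilityMeasure νa := by
    constructor
    rw [hνadef]
    simp only [Measure.smul_apply, Measure.restrict_apply_univ, smul_eq_mul]
    exact ENNReal.inv_mul_cancel hβ0 hβtop
  haveI := hνa_prob
  -- the coupling
  have hdiag_meas : Measurable fun x : E => (x, x) := measurable_id.prodMk measurable_id
  set π : Measure (E × E) :=
    (ν.restrict s).map (fun x => (x, x)) + (ν.restrict sᶜ).prod νa with hπdef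
  have hres : ν.restrict s = ν s • νa := by
    rw [hνadef, smul_smul, ENNReal.mul_inv_cancel hβ0 hβtop, one_smul]
  have hπprob : IsProbabilityMeasure π := by
    constructor
    rw [hπdef]
    simp only [Measure.coe_add, Pi.add_apply]
    rw [Measure.map_apply hdiag_meas MeasurableSet.univ, Set.preimage_univ,
      ← Set.univ_prod_univ, Measure.prod_prod]
    simp only [Measure.restrict_apply_univ]
    rw [hνa_prob.measure_univ, mul_one]
    exact hβs
  have hcoup : IsCoupling π ν νa := by
    constructor
    · rw [hπdef, Measure.map_add _ _ measurable_fst,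
        Measure.map_map measurable_fst hdiag_meas, Measure.map_fst_prod]
      have hcomp : (Prod.fst ∘ fun x : E => (x, x)) = id := rfl
      rw [hcomp, Measure.map_id, hνa_prob.measure_univ, one_smul,
        Measure.restrict_add_restrict_compl hs]
    · rw [hπdef, Measure.map_add _ _ measurable_snd,
        Measure.map_map measurable_snd hdiag_meas, Measure.map_snd_prod]
      have hcomp : (Prod.snd ∘ fun x : E => (x, x)) = id := rfl
      rw [hcomp, Measure.map_id, Measure.restrict_apply_univ, hres, ← add_smul, hβs, one_smul]
  -- cost function
  set g₂ : E → ℝ≥0∞ := fun x => ENNReal.ofReal (dist x x₀ ^ 2) with hg₂def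
  have hg₂ : Measurable g₂ :=
    ((continuous_id.dist continuous_const).pow 2).measurable.ennreal_ofReal
  have hfmeas : Measurable fun z : E × E => ENNReal.ofReal (dist z.1 z.2 ^ 2) :=
    ((continuous_fst.dist continuous_snd).pow 2).measurable.ennreal_ofReal
  set A := ∫⁻ x in sᶜ, g₂ x ∂ν with hAdef
  set B := ∫⁻ x, g₂ x ∂νa with hBdef
  -- bound on A from (Var-Ent)
  have hA : A ≤ ENNReal.ofReal D * relEnt ν μ := by
    have := hVarEnt h hm hpos hν hrel
    rwa [hAdef, hsc]
  -- bound on B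
  have hB : B ≤ ENNReal.ofReal β₀⁻¹ * (ENNReal.ofReal a * M) := by
    rw [hBdef, hνadef, lintegral_smul_measure]
    refine mul_le_mul' ?_ ?_
    · rw [ENNReal.ofReal_inv_of_pos hβ₀pos]
      exact ENNReal.inv_le_inv' hβ₀le
    · rw [hνdef, restrict_withDensity hs,
        lintegral_withDensity_eq_lintegral_mul _ hmν hg₂]
      calc ∫⁻ x in s, (fun x => ENNReal.ofReal (h x) * g₂ x) x ∂μ
          ≤ ∫⁻ x in s, ENNReal.ofReal a * g₂ x ∂μ := by
            refine setLIntegral_mono (hg₂.const_mul _) fun x hx => ?_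
            exact mul_le_mul' (ENNReal.ofReal_le_ofReal hx) le_rfl
        _ = ENNReal.ofReal a * ∫⁻ x in s, g₂ x ∂μ := lintegral_const_mul _ hg₂
        _ ≤ ENNReal.ofReal a * M := by
            rw [hMdef]
            exact mul_le_mul' le_rfl (setLIntegral_le_lintegral _ _)
  -- cost of π
  have hW : Wcost 2 ν νa ≤ ∫⁻ z, ENNReal.ofReal (dist z.1 z.2 ^ (2:ℝ)) ∂π := by
    rw [Wcost]
    exact iInf_le_of_le π (iInf_le_of_le hπprob (iInf_le_of_le hcoup le_rfl))
  have hrpow : ∀ z : E × E, ENNReal.ofReal (dist z.1 z.2 ^ (2:ℝ)) =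
      ENNReal.ofReal (dist z.1 z.2 ^ (2:ℕ)) := by
    intro z
    rw [show ((2:ℝ)) = ((2:ℕ):ℝ) by norm_num, Real.rpow_natCast]
  have hπ1 : ∫⁻ z, ENNReal.ofReal (dist z.1 z.2 ^ 2) ∂((ν.restrict s).map fun x => (x, x)) = 0 := by
    rw [lintegral_map hfmeas hdiag_meas]
    simp [dist_self]
  have hptwise : ∀ z : E × E, ENNReal.ofReal (dist z.1 z.2 ^ 2) ≤ 2 * g₂ z.1 + 2 * g₂ z.2 := by
    intro z
    have h1 : dist z.1 z.2 ^ 2 ≤ 2 * dist z.1 x₀ ^ 2 + 2 * dist z.2 x₀ ^ 2 := by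
      have ht := dist_triangle z.1 x₀ z.2
      rw [dist_comm x₀ z.2] at ht
      have hsq := mul_self_le_mul_self (dist_nonneg (x := z.1) (y := z.2)) ht
      nlinarith [sq_nonneg (dist z.1 x₀ - dist z.2 x₀), hsq]
    calc ENNReal.ofReal (dist z.1 z.2 ^ 2)
        ≤ ENNReal.ofReal (2 * dist z.1 x₀ ^ 2 + 2 * dist z.2 x₀ ^ 2) :=
          ENNReal.ofReal_le_ofReal h1
      _ = 2 * g₂ z.1 + 2 * g₂ z.2 := by
          rw [ENNReal.ofReal_add (by positivity) (by positivity),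
            ENNReal.ofReal_mul (by norm_num), ENNReal.ofReal_mul (by norm_num),
            ENNReal.ofReal_ofNat, hg₂def]
  have hπ2 : ∫⁻ z, ENNReal.ofReal (dist z.1 z.2 ^ 2) ∂((ν.restrict sᶜ).prod νa) ≤
      2 * A + ν sᶜ * (2 * B) := by
    calc ∫⁻ z, ENNReal.ofReal (dist z.1 z.2 ^ 2) ∂((ν.restrict sᶜ).prod νa)
        ≤ ∫⁻ z, (2 * g₂ z.1 + 2 * g₂ z.2) ∂((ν.restrict sᶜ).prod νa) := lintegral_mono hptwise
      _ = ∫⁻ z, 2 * g₂ z.1 ∂((ν.restrict sᶜ).prod νa) +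
          ∫⁻ z, 2 * g₂ z.2 ∂((ν.restrict sᶜ).prod νa) :=
          lintegral_add_left ((hg₂.comp measurable_fst).const_mul 2) _
      _ = 2 * A + ν sᶜ * (2 * B) := by
          have e1 : ∫⁻ z, 2 * g₂ z.1 ∂((ν.restrict sᶜ).prod νa) = 2 * A := by
            calc ∫⁻ z, 2 * g₂ z.1 ∂((ν.restrict sᶜ).prod νa)
                = ∫⁻ x, 2 * g₂ x ∂(((ν.restrict sᶜ).prod νa).map Prod.fst) :=
                  (lintegral_map (hg₂.const_mul 2) measurable_fst).symm
              _ = ∫⁻ x, 2 * g₂ x ∂(ν.restrict sᶜ) := by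
                  rw [Measure.map_fst_prod, hνa_prob.measure_univ, one_smul]
              _ = 2 * A := by rw [hAdef, lintegral_const_mul 2 hg₂]
          have e2 : ∫⁻ z, 2 * g₂ z.2 ∂((ν.restrict sᶜ).prod νa) = ν sᶜ * (2 * B) := by
            calc ∫⁻ z, 2 * g₂ z.2 ∂((ν.restrict sᶜ).prod νa)
                = ∫⁻ x, 2 * g₂ x ∂(((ν.restrict sᶜ).prod νa).map Prod.snd) :=
                  (lintegral_map (hg₂.const_mul 2) measurable_snd).symm
              _ = ∫⁻ x, 2 * g₂ x ∂((ν sᶜ) • νa) := by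
                  rw [Measure.map_snd_prod, Measure.restrict_apply_univ]
              _ = ν sᶜ * ∫⁻ x, 2 * g₂ x ∂νa := lintegral_smul_measure _ _
              _ = ν sᶜ * (2 * B) := by rw [hBdef, lintegral_const_mul 2 hg₂]
          rw [e1, e2]
  -- put everything together
  calc Wcost 2 ν νa ≤ ∫⁻ z, ENNReal.ofReal (dist z.1 z.2 ^ (2:ℝ)) ∂π := hW
    _ = ∫⁻ z, ENNReal.ofReal (dist z.1 z.2 ^ 2) ∂π := by simp_rw [hrpow]
    _ = ∫⁻ z, ENNReal.ofReal (dist z.1 z.2 ^ 2) ∂((ν.restrict s).map fun x => (x, x)) +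
        ∫⁻ z, ENNReal.ofReal (dist z.1 z.2 ^ 2) ∂((ν.restrict sᶜ).prod νa) := by
        rw [hπdef, lintegral_add_measure]
    _ ≤ 0 + (2 * A + ν sᶜ * (2 * B)) := by rw [hπ1]; exact add_le_add le_rfl hπ2
    _ = 2 * A + ν sᶜ * (2 * B) := by rw [zero_add]
    _ ≤ 2 * (ENNReal.ofReal D * relEnt ν μ) +
        (ENNReal.ofReal L⁻¹ * relEnt ν μ) * (2 * (ENNReal.ofReal β₀⁻¹ * (ENNReal.ofReal a * M))) := by
        exact add_le_add (mul_le_mul' le_rfl hA) (mul_le_mul' hνscle (mul_le_mul' le_rfl hB))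
    _ = c * relEnt ν μ := by rw [hcdef]; ring
    _ = ENNReal.ofReal c.toReal * relEnt ν μ := by rw [ENNReal.ofReal_toReal hc]



end
end

section
/- Let μ be a probability measure on a measurable space and h ≥ 0 a measurable function with ∫ h dμ = 1, and set ν = h·μ. Then for every p ∈ [1,2): 1 − (∫ h^{p/2} dμ)^{2/p} ≤ (2/p)·(1 − p/2)·H(ν,μ). -/
open MeasureTheory ENNReal
open scoped Classical

noncomputable section

/-- Pointwise inequality: `t - (1-q)·t·log t ≤ t^q` for `t ≥ 0` and `0 < q ≤ 1`. -/
lemma aux_pointwise_lower {t q : ℝ} (ht : 0 ≤ t) (hq0 : 0 < q) (hq1 : q ≤ 1) :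
    t - (1 - q) * (t * Real.log t) ≤ t ^ q := by
  rcases eq_or_lt_of_le ht with rfl | ht
  · simp [Real.zero_rpow hq0.ne']
  · have h1 : t ^ q = t * t ^ (q - 1) := by
      have := Real.rpow_one_add' (y := q - 1) ht.le (by simpa using hq0.ne')
      simpa using this
    have h2 : t ^ (q - 1) = Real.exp ((q - 1) * Real.log t) := by
      rw [Real.rpow_def_of_pos ht, mul_comm]
    have h3 : (q - 1) * Real.log t + 1 ≤ Real.exp ((q - 1) * Real.log t) :=
      Real.add_one_le_exp _
    calc t - (1 - q) * (t * Real.log t) = t * ((q - 1) * Real.log t + 1) := by ring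
      _ ≤ t * Real.exp ((q - 1) * Real.log t) := by
          exact mul_le_mul_of_nonneg_left h3 ht.le
      _ = t ^ q := by rw [h1, h2]

/-- Pointwise inequality: `t^q ≤ 1 + q·(t - 1)` for `t ≥ 0` and `0 ≤ q ≤ 1`. -/
lemma aux_pointwise_upper {t q : ℝ} (ht : 0 ≤ t) (hq0 : 0 ≤ q) (hq1 : q ≤ 1) :
    t ^ q ≤ 1 + q * (t - 1) := by
  have := rpow_one_add_le_one_add_mul_self (s := t - 1) (by linarith) hq0 hq1
  simpa using this

/-- Inequality (2.6): for `ν = h·μ` and `p ∈ [1,2)`,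
`1 - (∫ h^{p/2} dμ)^{2/p} ≤ (2/p)(1 - p/2) H(ν,μ)`. -/
theorem one_sub_pow_le_entropy
    {Ω : Type*} [MeasurableSpace Ω] (μ : Measure Ω) (hprob : IsProbabilityMeasure μ)
    (h : Ω → ℝ) (hmeas : Measurable h) (hpos : ∀ x, 0 ≤ h x)
    (hint : IsProbabilityMeasure (densMeas μ h))
    (p : ℝ) (hp1 : 1 ≤ p) (hp2 : p < 2) :
    ENNReal.ofReal (1 - (∫ x, h x ^ (p / 2) ∂μ) ^ (2 / p)) ≤
      ENNReal.ofReal ((2 / p) * (1 - p / 2)) * relEnt (densMeas μ h) μ := by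
  have hp0 : 0 < p := lt_of_lt_of_le one_pos hp1
  set q : ℝ := p / 2 with hq_def
  have hq0 : 0 < q := by positivity
  have hq1 : q < 1 := by rw [hq_def]; linarith
  set r : ℝ := 2 / p with hr_def
  have hr1 : 1 ≤ r := by rw [hr_def, le_div_iff₀ hp0]; linarith
  have hr0 : 0 < r := lt_of_lt_of_le one_pos hr1
  have hcoef : 0 < r * (1 - q) := by
    apply mul_pos hr0; linarith
  set ν : Measure Ω := densMeas μ h with hν_def
  have habs : ν ≪ μ := withDensity_absolutelyContinuous μ _
  have hdmeas : Measurable fun x => ENNReal.ofReal (h x) :=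
    ENNReal.measurable_ofReal.comp hmeas
  by_cases hI : Integrable (fun x => Real.log ((ν.rnDeriv μ) x).toReal) ν
  · -- finite entropy case
    have hrn : (ν.rnDeriv μ) =ᵐ[μ] fun x => ENNReal.ofReal (h x) :=
      Measure.rnDeriv_withDensity μ hdmeas
    have hrnν : (ν.rnDeriv μ) =ᵐ[ν] fun x => ENNReal.ofReal (h x) :=
      habs.ae_le hrn
    have hlogeq : (fun x => Real.log ((ν.rnDeriv μ) x).toReal)
        =ᵐ[ν] fun x => Real.log (h x) := by
      filter_upwards [hrnν] with x hx
      rw [hx, ENNReal.toReal_ofReal (hpos x)]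
    have hrelEnt : relEnt ν μ = ENNReal.ofReal (∫ x, Real.log (h x) ∂ν) := by
      rw [relEnt, if_pos ⟨habs, hI⟩, integral_congr_ae hlogeq]
    -- transfer integrals from ν to μ
    have hnn : ν = μ.withDensity fun x => (((h x).toNNReal : NNReal) : ℝ≥0∞) := rfl
    have hnnmeas : AEMeasurable (fun x => (h x).toNNReal) μ :=
      (measurable_real_toNNReal.comp hmeas).aemeasurable
    have htrans : ∀ g : Ω → ℝ, ∫ x, g x ∂ν = ∫ x, h x * g x ∂μ := by
      intro g
      rw [hnn, integral_withDensity_eq_integral_smul₀ hnnmeas g]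
      congr 1
      ext x
      simp [NNReal.smul_def, Real.coe_toNNReal _ (hpos x)]
    -- integrability facts
    have hfin : ∀ᵐ x ∂μ, ENNReal.ofReal (h x) < ⊤ := Filter.Eventually.of_forall
      fun x => ENNReal.ofReal_lt_top
    have hh_int : Integrable h μ := by
      have h1 : Integrable (fun _ => (1 : ℝ)) ν := integrable_const 1
      rw [hν_def, densMeas, integrable_withDensity_iff hdmeas hfin] at h1
      refine h1.congr ?_
      filter_upwards with x
      rw [one_mul, ENNReal.toReal_ofReal (hpos x)]
    have hlog_int : Integrable (fun x => Real.log (h x)) ν :=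
      (integrable_congr hlogeq).mp hI
    have hhlog_int : Integrable (fun x => h x * Real.log (h x)) μ := by
      have := (integrable_withDensity_iff hdmeas hfin
        (g := fun x => Real.log (h x))).mp (by rwa [← densMeas, ← hν_def])
      refine this.congr ?_
      filter_upwards with x
      rw [ENNReal.toReal_ofReal (hpos x), mul_comm]
    have hrpow_meas : Measurable fun x => h x ^ q :=
      (Real.continuous_rpow_const hq0.le).measurable.comp hmeas
    have hbound_int : Integrable (fun x => 1 + h x) μ := (integrable_const 1).add hh_int
    have hrpow_int : Integrable (fun x => h x ^ q) μ := by
      refine Integrable.mono' hbound_int hrpow_meas.aestronglyMeasurable ?_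
      filter_upwards with x
      rw [Real.norm_eq_abs, abs_of_nonneg (Real.rpow_nonneg (hpos x) q)]
      rcases le_total (h x) 1 with hx | hx
      · have : h x ^ q ≤ 1 := Real.rpow_le_one (hpos x) hx hq0.le
        linarith [hpos x]
      · have : h x ^ q ≤ h x ^ (1 : ℝ) :=
          Real.rpow_le_rpow_of_exponent_le hx hq1.le
        rw [Real.rpow_one] at this
        linarith
    -- ∫ h dμ = 1
    have hμ1 : ∫ x, h x ∂μ = 1 := by
      have : ∫ x, (1 : ℝ) ∂ν = 1 := by simp
      rw [htrans (fun _ => (1 : ℝ))] at this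
      simpa using this
    set E : ℝ := ∫ x, Real.log (h x) ∂ν with hE_def
    have hE_eq : E = ∫ x, h x * Real.log (h x) ∂μ := by rw [hE_def, htrans]
    set I : ℝ := ∫ x, h x ^ q ∂μ with hI_def
    -- Step A : 1 - I ≤ (1 - q) * E
    have stepA : 1 - I ≤ (1 - q) * E := by
      have hmono : ∫ x, (h x - (1 - q) * (h x * Real.log (h x))) ∂μ ≤ I := by
        apply integral_mono _ hrpow_int
        · intro x
          exact aux_pointwise_lower (hpos x) hq0 hq1.le
        · exact hh_int.sub (hhlog_int.const_mul _)
      rw [integral_sub hh_int (hhlog_int.const_mul _), integral_const_mul, hμ1,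
        ← hE_eq] at hmono
      linarith
    -- Step B : I ≤ 1 and 0 ≤ I
    have hI_le1 : I ≤ 1 := by
      have hqh_int : Integrable (fun x => q * h x) μ := hh_int.const_mul q
      have hmono : I ≤ ∫ x, (q * h x + (1 - q)) ∂μ := by
        apply integral_mono hrpow_int (hqh_int.add (integrable_const (1 - q)))
        intro x
        have := aux_pointwise_upper (hpos x) hq0.le hq1.le
        simp only [Pi.add_apply]
        linarith
      have heq : ∫ x, (q * h x + (1 - q)) ∂μ = 1 := by
        rw [integral_add hqh_int (integrable_const (1 - q)), integral_const_mul, hμ1,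
          integral_const]
        simp
      linarith
    have hI_nonneg : 0 ≤ I :=
      integral_nonneg fun x => Real.rpow_nonneg (hpos x) q
    -- Step C : 1 - I ^ r ≤ r * (1 - I)
    have stepC : 1 - I ^ r ≤ r * (1 - I) := by
      have := one_add_mul_self_le_rpow_one_add (s := I - 1) (by linarith) hr1
      have h2 : 1 + r * (I - 1) ≤ I ^ r := by simpa using this
      linarith
    -- combine
    have hmain : 1 - I ^ r ≤ (r * (1 - q)) * E := by
      calc 1 - I ^ r ≤ r * (1 - I) := stepC
        _ ≤ r * ((1 - q) * E) := by
            exact mul_le_mul_of_nonneg_left stepA hr0.le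
        _ = (r * (1 - q)) * E := by ring
    rw [hrelEnt, ← ENNReal.ofReal_mul hcoef.le]
    exact ENNReal.ofReal_le_ofReal hmain
  · -- infinite entropy case
    have : relEnt ν μ = ∞ := by
      rw [relEnt, if_neg]
      rintro ⟨-, h2⟩
      exact hI h2
    rw [this, ENNReal.mul_top (by simp [ENNReal.ofReal_eq_zero, not_le, hcoef])]
    exact le_top

end
end

section
/- Let (E,d) be a complete separable metric space, p ≥ 1, and μ a Borel probability measure on E satisfying EI_ε(p): ∫ exp(ε·d(x,x₀)^p) dμ(x) < ∞ for some ε > 0 and x₀ ∈ E. Then there exists a constant C(ε) such that for every probability measure ν on E, W_p^p(ν,μ) ≤ C(ε)·( H(ν,μ) + H(ν,μ)^{1/2} ). -/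
/-!
Write `f = dν/dμ`, `φ = d(·, x₀)^p` and split `ν = s + ρ₁`, `μ = s + ρ₂` with `s = min f 1 • μ`.
Leaving `s` in place and coupling `ρ₁` with `ρ₂` independently gives
`W_p^p(ν, μ) ≤ 2^(p-1) ∫ φ |f - 1| dμ`. The relative entropy is `H = ∫ klFun f dμ` with
`klFun t = t log t + 1 - t`; let `M = ∫ exp (ε φ) dμ`. On `{f ≤ 2}`, `|f - 1| ≤ 3 √(klFun f)` and
Cauchy–Schwarz give `O(√(M H))`. On `{f > 2}`, Young's inequality `a b ≤ exp a + klFun b` gives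
`O(H + ∫_{f > 2} exp (ε φ / 2) dμ)`, and the last integral is `O(√(M H))` by Cauchy–Schwarz and the
Markov bound `μ {f > 2} ≤ 9 H`.
-/

open MeasureTheory ENNReal
open scoped Classical

noncomputable section

open InformationTheory Real

lemma sq_sqrt_sub_one_le_klFun {t : ℝ} (ht : 0 ≤ t) : (√t - 1) ^ 2 ≤ klFun t := by
  obtain ⟨s, hs, rfl⟩ : ∃ s, 0 ≤ s ∧ s ^ 2 = t := ⟨√t, sqrt_nonneg t, sq_sqrt ht⟩
  rw [sqrt_sq hs, klFun, Real.log_pow]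
  rcases hs.eq_or_lt with rfl | hs
  · simp
  -- `klFun (s²) - (s - 1)² = 2 s (s log s - s + 1)`, and `s log s ≥ s - 1`
  have hlog : s - 1 ≤ s * log s := by
    have := mul_le_mul_of_nonneg_left (one_sub_inv_le_log_of_pos hs) hs.le
    rwa [mul_sub, mul_one, mul_inv_cancel₀ hs.ne'] at this
  push_cast
  nlinarith [mul_le_mul_of_nonneg_left hlog hs.le]

lemma abs_sub_one_le_three_mul_sqrt_klFun {t : ℝ} (ht : 0 ≤ t) (ht2 : t ≤ 2) :
    |t - 1| ≤ 3 * √(klFun t) := by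
  have hsq : |√t - 1| ≤ √(klFun t) := by
    rw [← sqrt_sq_eq_abs]
    exact sqrt_le_sqrt (sq_sqrt_sub_one_le_klFun ht)
  have hs2 : √t ≤ 2 := by
    rw [show (2 : ℝ) = √(2 ^ 2) by simp]
    exact sqrt_le_sqrt (by linarith)
  have hfac : |t - 1| = |√t - 1| * (√t + 1) := by
    rw [← abs_of_nonneg (by positivity : 0 ≤ √t + 1), ← abs_mul]
    congr 1
    nlinarith [sq_sqrt ht]
  rw [hfac]
  nlinarith [abs_nonneg (√t - 1), sqrt_nonneg t]

lemma one_div_nine_le_klFun {t : ℝ} (ht : 2 < t) : 1 / 9 ≤ klFun t := by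
  have h2 : √2 ≤ √t := sqrt_le_sqrt ht.le
  have h43 : 4 / 3 ≤ √2 := by
    rw [show (4 / 3 : ℝ) = √((4 / 3) ^ 2) by rw [sqrt_sq (by norm_num)]]
    exact sqrt_le_sqrt (by norm_num)
  nlinarith [sq_sqrt_sub_one_le_klFun (by linarith : (0 : ℝ) ≤ t)]

lemma mul_le_exp_add_klFun (s : ℝ) {t : ℝ} (ht : 0 ≤ t) : s * t ≤ exp s + klFun t := by
  rcases ht.eq_or_lt with rfl | ht
  · simp [klFun]; positivity
  have h : t * (s - log t + 1) ≤ exp s := by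
    calc t * (s - log t + 1) ≤ t * exp (s - log t) :=
          mul_le_mul_of_nonneg_left (by linarith [add_one_le_exp (s - log t)]) ht.le
      _ = exp s := by rw [exp_sub, exp_log ht]; field_simp
  rw [klFun]
  nlinarith

lemma sq_le_exp_two_mul {x : ℝ} (hx : 0 ≤ x) : x ^ 2 ≤ exp (2 * x) := by
  have h : x ≤ exp x := by linarith [add_one_le_exp x]
  calc x ^ 2 ≤ exp x ^ 2 := pow_le_pow_left₀ hx h 2
    _ = exp (2 * x) := by rw [← exp_nat_mul]; norm_num

section WeightedTotalVariation

variable {α : Type*} [MeasurableSpace α] {μ : Measure α} {ψ f : α → ℝ}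

lemma lintegral_mul_le_sqrt_mul_sqrt {g h : α → ℝ≥0∞} (hg : AEMeasurable g μ)
    (hh : AEMeasurable h μ) :
    ∫⁻ x, g x * h x ∂μ ≤ (∫⁻ x, g x ^ 2 ∂μ) ^ (1 / 2 : ℝ) * (∫⁻ x, h x ^ 2 ∂μ) ^ (1 / 2 : ℝ) := by
  simpa only [ENNReal.rpow_two, Pi.mul_apply] using
    ENNReal.lintegral_mul_le_Lp_mul_Lq μ Real.HolderConjugate.two_two hg hh

lemma lintegral_ofReal_sq_le (hψ0 : ∀ x, 0 ≤ ψ x) :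
    ∫⁻ x, ENNReal.ofReal (ψ x) ^ 2 ∂μ ≤ ∫⁻ x, ENNReal.ofReal (exp (2 * ψ x)) ∂μ :=
  lintegral_mono fun x => by
    rw [← ENNReal.ofReal_pow (hψ0 x)]
    exact ENNReal.ofReal_le_ofReal (sq_le_exp_two_mul (hψ0 x))

lemma setLIntegral_le_two_le (hψ : Measurable ψ) (hψ0 : ∀ x, 0 ≤ ψ x) (hf : Measurable f)
    (hf0 : ∀ x, 0 ≤ f x) :
    ∫⁻ x in {x | f x ≤ 2}, ENNReal.ofReal (ψ x) * ENNReal.ofReal |f x - 1| ∂μ ≤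
      3 * (∫⁻ x, ENNReal.ofReal (exp (2 * ψ x)) ∂μ) ^ (1 / 2 : ℝ) *
        (∫⁻ x, ENNReal.ofReal (klFun (f x)) ∂μ) ^ (1 / 2 : ℝ) := by
  have hsqrt : ∀ x, ENNReal.ofReal √(klFun (f x)) ^ 2 = ENNReal.ofReal (klFun (f x)) :=
    fun x => by rw [← ENNReal.ofReal_pow (sqrt_nonneg _), sq_sqrt (klFun_nonneg (hf0 x))]
  calc ∫⁻ x in {x | f x ≤ 2}, ENNReal.ofReal (ψ x) * ENNReal.ofReal |f x - 1| ∂μ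
      ≤ ∫⁻ x in {x | f x ≤ 2},
          3 * (ENNReal.ofReal (ψ x) * ENNReal.ofReal √(klFun (f x))) ∂μ := by
        refine setLIntegral_mono' (measurableSet_le hf measurable_const) fun x hx => ?_
        calc ENNReal.ofReal (ψ x) * ENNReal.ofReal |f x - 1|
            ≤ ENNReal.ofReal (ψ x) * ENNReal.ofReal (3 * √(klFun (f x))) := by
              gcongr
              exact abs_sub_one_le_three_mul_sqrt_klFun (hf0 x) hx
          _ = 3 * (ENNReal.ofReal (ψ x) * ENNReal.ofReal √(klFun (f x))) := by
              rw [ENNReal.ofReal_mul (by norm_num), ENNReal.ofReal_ofNat]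
              ring
    _ ≤ 3 * ∫⁻ x, ENNReal.ofReal (ψ x) * ENNReal.ofReal √(klFun (f x)) ∂μ := by
        rw [← lintegral_const_mul' _ _ (by simp)]
        exact setLIntegral_le_lintegral _ _
    _ ≤ 3 * ((∫⁻ x, ENNReal.ofReal (exp (2 * ψ x)) ∂μ) ^ (1 / 2 : ℝ) *
          (∫⁻ x, ENNReal.ofReal (klFun (f x)) ∂μ) ^ (1 / 2 : ℝ)) := by
        gcongr
        refine (lintegral_mul_le_sqrt_mul_sqrt (by fun_prop) (by fun_prop)).trans ?_
        simp only [hsqrt]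
        gcongr ?_ ^ _ * _
        exact lintegral_ofReal_sq_le hψ0
    _ = _ := (mul_assoc _ _ _).symm

lemma measure_two_lt_le (hf : Measurable f) :
    μ {x | 2 < f x} ≤ 9 * ∫⁻ x, ENNReal.ofReal (klFun (f x)) ∂μ := by
  calc μ {x | 2 < f x} = ∫⁻ _ in {x | 2 < f x}, 1 ∂μ := (setLIntegral_one _).symm
    _ ≤ ∫⁻ x in {x | 2 < f x}, 9 * ENNReal.ofReal (klFun (f x)) ∂μ := by
        refine setLIntegral_mono' (measurableSet_lt measurable_const hf) fun x hx => ?_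
        rw [← ENNReal.ofReal_ofNat 9, ← ENNReal.ofReal_mul (by norm_num)]
        exact ENNReal.one_le_ofReal.mpr (by linarith [one_div_nine_le_klFun hx])
    _ ≤ 9 * ∫⁻ x, ENNReal.ofReal (klFun (f x)) ∂μ := by
        rw [← lintegral_const_mul' _ _ (by simp)]
        exact setLIntegral_le_lintegral _ _

lemma setLIntegral_two_lt_le (hψ : Measurable ψ) (hψ0 : ∀ x, 0 ≤ ψ x) (hf : Measurable f) :
    ∫⁻ x in {x | 2 < f x}, ENNReal.ofReal (ψ x) * ENNReal.ofReal |f x - 1| ∂μ ≤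
      ∫⁻ x, ENNReal.ofReal (klFun (f x)) ∂μ +
        3 * (∫⁻ x, ENNReal.ofReal (exp (2 * ψ x)) ∂μ) ^ (1 / 2 : ℝ) *
          (∫⁻ x, ENNReal.ofReal (klFun (f x)) ∂μ) ^ (1 / 2 : ℝ) := by
  set A := {x | 2 < f x}
  set H := ∫⁻ x, ENNReal.ofReal (klFun (f x)) ∂μ
  set I := ∫⁻ x, ENNReal.ofReal (exp (2 * ψ x)) ∂μ
  have hexp :
      ∫⁻ x in A, ENNReal.ofReal (exp (ψ x)) ∂μ ≤ 3 * I ^ (1 / 2 : ℝ) * H ^ (1 / 2 : ℝ) :=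
    calc ∫⁻ x in A, ENNReal.ofReal (exp (ψ x)) ∂μ
        = ∫⁻ x in A, 1 * ENNReal.ofReal (exp (ψ x)) ∂μ := by simp only [one_mul]
      _ ≤ (∫⁻ _ in A, 1 ^ 2 ∂μ) ^ (1 / 2 : ℝ) *
          (∫⁻ x in A, ENNReal.ofReal (exp (ψ x)) ^ 2 ∂μ) ^ (1 / 2 : ℝ) :=
        lintegral_mul_le_sqrt_mul_sqrt aemeasurable_const (by fun_prop)
      _ ≤ (3 ^ 2 * H) ^ (1 / 2 : ℝ) * I ^ (1 / 2 : ℝ) := by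
        simp only [one_pow, setLIntegral_one]
        gcongr
        · exact (measure_two_lt_le hf).trans_eq (by norm_num; rfl)
        · refine (setLIntegral_le_lintegral _ _).trans_eq (lintegral_congr fun x => ?_)
          rw [← ENNReal.ofReal_pow (exp_pos _).le, ← exp_nat_mul]
          norm_num
      _ = 3 * I ^ (1 / 2 : ℝ) * H ^ (1 / 2 : ℝ) := by
        rw [ENNReal.mul_rpow_of_nonneg _ _ (by norm_num), ← ENNReal.rpow_two,
          ← ENNReal.rpow_mul]
        norm_num
        ring
  calc ∫⁻ x in A, ENNReal.ofReal (ψ x) * ENNReal.ofReal |f x - 1| ∂μ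
      ≤ ∫⁻ x in A, ENNReal.ofReal (klFun (f x)) + ENNReal.ofReal (exp (ψ x)) ∂μ := by
        refine setLIntegral_mono' (measurableSet_lt measurable_const hf) fun x hx => ?_
        have hx : 2 < f x := hx
        rw [← ENNReal.ofReal_mul (hψ0 x)]
        refine (ENNReal.ofReal_le_ofReal ?_).trans ENNReal.ofReal_add_le
        rw [abs_of_pos (by linarith)]
        nlinarith [mul_le_exp_add_klFun (ψ x) (by linarith : 0 ≤ f x), hψ0 x]
    _ ≤ H + 3 * I ^ (1 / 2 : ℝ) * H ^ (1 / 2 : ℝ) := by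
        rw [lintegral_add_left (by fun_prop)]
        exact add_le_add (setLIntegral_le_lintegral _ _) hexp

lemma lintegral_mul_abs_sub_one_le (hψ : Measurable ψ) (hψ0 : ∀ x, 0 ≤ ψ x) (hf : Measurable f)
    (hf0 : ∀ x, 0 ≤ f x) :
    ∫⁻ x, ENNReal.ofReal (ψ x) * ENNReal.ofReal |f x - 1| ∂μ ≤
      ∫⁻ x, ENNReal.ofReal (klFun (f x)) ∂μ +
        6 * (∫⁻ x, ENNReal.ofReal (exp (2 * ψ x)) ∂μ) ^ (1 / 2 : ℝ) *
          (∫⁻ x, ENNReal.ofReal (klFun (f x)) ∂μ) ^ (1 / 2 : ℝ) := by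
  rw [← lintegral_add_compl _ (measurableSet_lt measurable_const hf), Set.compl_ofPred]
  simp only [not_lt]
  calc _ ≤ _ :=
        add_le_add (setLIntegral_two_lt_le hψ hψ0 hf) (setLIntegral_le_two_le hψ hψ0 hf hf0)
    _ = _ := by ring

end WeightedTotalVariation

lemma ofReal_dist_rpow_le {E : Type*} [PseudoMetricSpace E] {p : ℝ} (hp : 1 ≤ p) (x y z : E) :
    ENNReal.ofReal (dist x y ^ p) ≤
      2 ^ (p - 1) * (ENNReal.ofReal (dist x z ^ p) + ENNReal.ofReal (dist y z ^ p)) := by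
  have hp0 : 0 ≤ p := by linarith
  have hedist : ∀ a b : E, ENNReal.ofReal (dist a b ^ p) = edist a b ^ p := fun a b => by
    rw [← ENNReal.ofReal_rpow_of_nonneg dist_nonneg hp0, edist_dist]
  simp only [hedist]
  calc edist x y ^ p ≤ (edist x z + edist y z) ^ p := by gcongr; exact edist_triangle_right x y z
    _ ≤ _ := ENNReal.rpow_add_le_mul_rpow_add_rpow _ _ hp

section Coupling

variable {E : Type*} [MeasurableSpace E]

lemma IsCoupling.add {γ γ' : Measure (E × E)} {μ ν μ' ν' : Measure E} (h : IsCoupling γ μ ν)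
    (h' : IsCoupling γ' μ' ν') : IsCoupling (γ + γ') (μ + μ') (ν + ν') :=
  ⟨by rw [Measure.map_add _ _ measurable_fst, h.1, h'.1],
    by rw [Measure.map_add _ _ measurable_snd, h.2, h'.2]⟩

lemma isCoupling_map_diag (s : Measure E) : IsCoupling (s.map fun x => (x, x)) s s := by
  have hdiag : Measurable fun x : E => (x, x) := measurable_id.prodMk measurable_id
  exact ⟨by rw [Measure.map_map measurable_fst hdiag]; exact Measure.map_id,
    by rw [Measure.map_map measurable_snd hdiag]; exact Measure.map_id⟩

lemma measure_univ_inv_smul_smul (ρ : Measure E) [IsFiniteMeasure ρ] :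
    (ρ Set.univ)⁻¹ • ρ Set.univ • ρ = ρ := by
  rcases eq_or_ne (ρ Set.univ) 0 with h | h
  · simp [Measure.measure_univ_eq_zero.mp h]
  · rw [smul_smul, ENNReal.inv_mul_cancel h (measure_ne_top ρ _), one_smul]

lemma isCoupling_smul_prod (ρ₁ ρ₂ : Measure E) [IsFiniteMeasure ρ₁] [IsFiniteMeasure ρ₂]
    (hm : ρ₁ Set.univ = ρ₂ Set.univ) : IsCoupling ((ρ₁ Set.univ)⁻¹ • ρ₁.prod ρ₂) ρ₁ ρ₂ := by
  constructor
  · rw [Measure.map_smul, Measure.map_fst_prod, ← hm, measure_univ_inv_smul_smul]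
  · rw [Measure.map_smul, Measure.map_snd_prod, hm, measure_univ_inv_smul_smul]

lemma IsCoupling.isProbabilityMeasure {γ : Measure (E × E)} {μ ν : Measure E}
    [IsProbabilityMeasure μ] (h : IsCoupling γ μ ν) : IsProbabilityMeasure γ :=
  ⟨by rw [← Set.preimage_univ (f := Prod.fst), ← Measure.map_apply measurable_fst .univ, h.1,
    measure_univ]⟩

variable [MetricSpace E] {p : ℝ}

lemma wcost_le_lintegral {γ : Measure (E × E)} {μ ν : Measure E} [IsProbabilityMeasure μ]
    (h : IsCoupling γ μ ν) : Wcost p μ ν ≤ ∫⁻ z, ENNReal.ofReal (dist z.1 z.2 ^ p) ∂γ :=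
  iInf₂_le_of_le γ h.isProbabilityMeasure (iInf_le _ h)

lemma lintegral_dist_rpow_map_diag (hp : 0 < p) (s : Measure E) :
    ∫⁻ z, ENNReal.ofReal (dist z.1 z.2 ^ p) ∂(s.map fun x => (x, x)) = 0 :=
  le_antisymm ((lintegral_map_le _ _).trans_eq (by simp [Real.zero_rpow hp.ne'])) zero_le

variable [OpensMeasurableSpace E]

lemma IsCoupling.lintegral_dist_rpow_le {γ : Measure (E × E)} {ρ₁ ρ₂ : Measure E}
    (h : IsCoupling γ ρ₁ ρ₂) (hp : 1 ≤ p) (x₀ : E) :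
    ∫⁻ z, ENNReal.ofReal (dist z.1 z.2 ^ p) ∂γ ≤
      2 ^ (p - 1) * (∫⁻ x, ENNReal.ofReal (dist x x₀ ^ p) ∂ρ₁ +
        ∫⁻ x, ENNReal.ofReal (dist x x₀ ^ p) ∂ρ₂) := by
  have hφ : Measurable fun x : E => ENNReal.ofReal (dist x x₀ ^ p) := by fun_prop
  calc ∫⁻ z, ENNReal.ofReal (dist z.1 z.2 ^ p) ∂γ
      ≤ ∫⁻ z, 2 ^ (p - 1) * (ENNReal.ofReal (dist z.1 x₀ ^ p) +
          ENNReal.ofReal (dist z.2 x₀ ^ p)) ∂γ :=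
        lintegral_mono fun z => ofReal_dist_rpow_le hp z.1 z.2 x₀
    _ = _ := by
      rw [lintegral_const_mul _ (by fun_prop), lintegral_add_left (by fun_prop),
        ← h.1, ← h.2, lintegral_map hφ measurable_fst, lintegral_map hφ measurable_snd]

lemma wcost_add_le (hp : 1 ≤ p) (x₀ : E) (s ρ₁ ρ₂ : Measure E) [IsProbabilityMeasure (s + ρ₁)]
    [IsFiniteMeasure ρ₁] [IsFiniteMeasure ρ₂] (hm : ρ₁ Set.univ = ρ₂ Set.univ) :
    Wcost p (s + ρ₁) (s + ρ₂) ≤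
      2 ^ (p - 1) * (∫⁻ x, ENNReal.ofReal (dist x x₀ ^ p) ∂ρ₁ +
        ∫⁻ x, ENNReal.ofReal (dist x x₀ ^ p) ∂ρ₂) := by
  have hres := isCoupling_smul_prod ρ₁ ρ₂ hm
  refine (wcost_le_lintegral ((isCoupling_map_diag s).add hres)).trans ?_
  rw [lintegral_add_measure, lintegral_dist_rpow_map_diag (by linarith), zero_add]
  exact hres.lintegral_dist_rpow_le hp x₀

end Coupling

lemma ofReal_abs_toReal_sub_one {a : ℝ≥0∞} (ha : a ≠ ∞) :
    ENNReal.ofReal |a.toReal - 1| = (a - 1) + (1 - a) := by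
  obtain ⟨t, ht, rfl⟩ : ∃ t : ℝ, 0 ≤ t ∧ ENNReal.ofReal t = a := ⟨a.toReal, by simp, by simp [ha]⟩
  rw [ENNReal.toReal_ofReal ht, ← ENNReal.ofReal_one, ← ENNReal.ofReal_sub _ zero_le_one,
    ← ENNReal.ofReal_sub _ ht]
  rcases le_total t 1 with h | h
  · rw [abs_of_nonpos (by linarith), ENNReal.ofReal_of_nonpos (by linarith : t - 1 ≤ 0), zero_add,
      neg_sub]
  · rw [abs_of_nonneg (by linarith), ENNReal.ofReal_of_nonpos (by linarith : 1 - t ≤ 0), add_zero]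

lemma wcost_withDensity_le {E : Type*} [MetricSpace E] [MeasurableSpace E]
    [OpensMeasurableSpace E] {p : ℝ} (hp : 1 ≤ p) (x₀ : E) (μ : Measure E) [IsProbabilityMeasure μ]
    {u : E → ℝ≥0∞} (hu : Measurable u) (hu1 : ∫⁻ x, u x ∂μ = 1) :
    Wcost p (μ.withDensity u) μ ≤ 2 ^ (p - 1) *
      ∫⁻ x, ENNReal.ofReal (dist x x₀ ^ p) * ENNReal.ofReal |(u x).toReal - 1| ∂μ := by
  set s := μ.withDensity fun x => min (u x) 1
  set ρ₁ := μ.withDensity fun x => u x - 1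
  set ρ₂ := μ.withDensity fun x => 1 - u x
  have hν : s + ρ₁ = μ.withDensity u := by
    rw [← withDensity_add_left (by fun_prop)]
    congr with x
    exact (add_comm _ _).trans tsub_add_min
  have hμ : s + ρ₂ = μ := by
    rw [← withDensity_add_left (by fun_prop)]
    conv_rhs => rw [← withDensity_one (μ := μ)]
    congr with x
    simp only [Pi.add_apply, Pi.one_apply]
    rw [min_comm, add_comm]
    exact tsub_add_min
  have : IsProbabilityMeasure (s + ρ₁) :=
    ⟨by rw [hν, withDensity_apply _ .univ, Measure.restrict_univ, hu1]⟩
  have : IsFiniteMeasure ρ₁ := isFiniteMeasure_withDensity <| ne_top_of_le_ne_top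
    (by simp [hu1]) (lintegral_mono fun x => tsub_le_self)
  have : IsFiniteMeasure ρ₂ := isFiniteMeasure_withDensity <| ne_top_of_le_ne_top
    (by simp) (lintegral_mono fun x => tsub_le_self)
  have hm : ρ₁ Set.univ = ρ₂ Set.univ := by
    have hs : s Set.univ ≠ ∞ := ne_top_of_le_ne_top (measure_ne_top (s + ρ₁) _)
      (by rw [Measure.add_apply]; exact le_self_add)
    refine (ENNReal.add_right_inj hs).mp ?_
    rw [← Measure.add_apply, ← Measure.add_apply, hμ, measure_univ, measure_univ]
  have hu_lt_top : ∀ᵐ x ∂μ, u x < ∞ := ae_lt_top hu (by simp [hu1])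
  calc Wcost p (μ.withDensity u) μ = Wcost p (s + ρ₁) (s + ρ₂) := by rw [hν, hμ]
    _ ≤ 2 ^ (p - 1) * (∫⁻ x, ENNReal.ofReal (dist x x₀ ^ p) ∂ρ₁ +
          ∫⁻ x, ENNReal.ofReal (dist x x₀ ^ p) ∂ρ₂) := wcost_add_le hp x₀ s ρ₁ ρ₂ hm
    _ = _ := by
      rw [lintegral_withDensity_eq_lintegral_mul _ (by fun_prop) (by fun_prop),
        lintegral_withDensity_eq_lintegral_mul _ (by fun_prop) (by fun_prop),
        ← lintegral_add_left (by fun_prop)]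
      congr 1
      refine lintegral_congr_ae ?_
      filter_upwards [hu_lt_top] with x hx
      simp only [Pi.mul_apply, ofReal_abs_toReal_sub_one hx.ne]
      ring

lemma relEnt_eq_klDiv {Ω : Type*} [MeasurableSpace Ω] (ν μ : Measure Ω) [IsProbabilityMeasure ν]
    [IsProbabilityMeasure μ] : relEnt ν μ = klDiv ν μ := by
  rw [relEnt, klDiv_def]
  simp only [probReal_univ, add_sub_cancel_right]
  rfl

lemma wcost_le_klDiv {E : Type*} [MetricSpace E] [MeasurableSpace E] [OpensMeasurableSpace E]
    {p ε : ℝ} (hp : 1 ≤ p) (hε : 0 < ε) (x₀ : E) {μ ν : Measure E} [IsProbabilityMeasure μ]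
    [IsProbabilityMeasure ν] (hac : ν ≪ μ) :
    Wcost p ν μ ≤ 2 ^ (p - 1) * ENNReal.ofReal (2 / ε) * (klDiv ν μ +
      6 * (∫⁻ x, ENNReal.ofReal (exp (ε * dist x x₀ ^ p)) ∂μ) ^ (1 / 2 : ℝ) *
        klDiv ν μ ^ (1 / 2 : ℝ)) := by
  set f := fun x => (ν.rnDeriv μ x).toReal
  -- rescale the cost so that the exponential moment reads `∫ exp (2 ψ)`
  set ψ := fun x => ε / 2 * dist x x₀ ^ p
  have hψ0 : ∀ x, 0 ≤ ψ x := fun x => by positivity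
  have hscale : ∀ x,
      ENNReal.ofReal (dist x x₀ ^ p) = ENNReal.ofReal (2 / ε) * ENNReal.ofReal (ψ x) := fun x => by
    rw [← ENNReal.ofReal_mul (by positivity)]
    congr 1
    simp only [ψ]
    field_simp
  have hexp : ∀ x, exp (2 * ψ x) = exp (ε * dist x x₀ ^ p) := fun x => by congr 1; ring
  rw [klDiv_eq_lintegral_klFun_of_ac hac]
  calc Wcost p ν μ = Wcost p (μ.withDensity (ν.rnDeriv μ)) μ := by
        rw [Measure.withDensity_rnDeriv_eq ν μ hac]
    _ ≤ 2 ^ (p - 1) * ∫⁻ x, ENNReal.ofReal (dist x x₀ ^ p) * ENNReal.ofReal |f x - 1| ∂μ :=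
        wcost_withDensity_le hp x₀ μ (Measure.measurable_rnDeriv ν μ)
          (by rw [Measure.lintegral_rnDeriv hac, measure_univ])
    _ = 2 ^ (p - 1) * ENNReal.ofReal (2 / ε) *
          ∫⁻ x, ENNReal.ofReal (ψ x) * ENNReal.ofReal |f x - 1| ∂μ := by
        simp_rw [hscale, mul_assoc]
        rw [lintegral_const_mul' _ _ ENNReal.ofReal_ne_top]
    _ ≤ _ := by
        gcongr
        simpa only [hexp] using lintegral_mul_abs_sub_one_le (by fun_prop) hψ0 (by fun_prop)
          fun x => ENNReal.toReal_nonneg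

theorem bolley_villani_general
    {E : Type*} [MetricSpace E]
    [MeasurableSpace E] [BorelSpace E]
    (μ : Measure E) (hprob : IsProbabilityMeasure μ)
    (p : ℝ) (hp : 1 ≤ p) (ε : ℝ) (hε : 0 < ε) (x₀ : E)
    (hEI : Integrable (fun x => Real.exp (ε * dist x x₀ ^ p)) μ) :
    ∃ C : ℝ, ∀ ν : Measure E, IsProbabilityMeasure ν →
      Wcost p ν μ ≤
        ENNReal.ofReal C * (relEnt ν μ + relEnt ν μ ^ (1 / 2 : ℝ)) := by
  set J := (∫⁻ x, ENNReal.ofReal (exp (ε * dist x x₀ ^ p)) ∂μ) ^ (1 / 2 : ℝ)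
  have hJ : J ≠ ∞ := ENNReal.rpow_ne_top_of_nonneg (by norm_num) hEI.lintegral_lt_top.ne
  set K : ℝ≥0∞ := 2 ^ (p - 1) * ENNReal.ofReal (2 / ε) * (1 + 6 * J)
  have hK : K ≠ ∞ := by finiteness
  have hK0 : K ≠ 0 := by positivity
  refine ⟨K.toReal, fun ν hν => ?_⟩
  rw [ENNReal.ofReal_toReal hK, relEnt_eq_klDiv]
  by_cases hac : ν ≪ μ
  swap
  · simp [klDiv_of_not_ac hac, hK0]
  set H := klDiv ν μ
  calc Wcost p ν μ ≤ 2 ^ (p - 1) * ENNReal.ofReal (2 / ε) * (H + 6 * J * H ^ (1 / 2 : ℝ)) :=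
        wcost_le_klDiv hp hε x₀ hac
    _ ≤ 2 ^ (p - 1) * ENNReal.ofReal (2 / ε) * ((1 + 6 * J) * (H + H ^ (1 / 2 : ℝ))) := by
        gcongr
        rw [add_mul, mul_add, mul_add, one_mul, one_mul]
        exact add_le_add le_self_add le_add_self
    _ = K * (H + H ^ (1 / 2 : ℝ)) := by ring

/-- **Proposition 1.14 (Bolley–Villani).** `EI_ε(p)` implies
`W_p^p(ν,μ) ≤ C(ε) (H(ν,μ) + H(ν,μ)^{1/2})` for all probability measures `ν`. -/
theorem bolley_villani
    {E : Type*} [MetricSpace E] [CompleteSpace E] [TopologicalSpace.SeparableSpace E]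
    [MeasurableSpace E] [BorelSpace E]
    (μ : Measure E) (hprob : IsProbabilityMeasure μ)
    (p : ℝ) (hp : 1 ≤ p) (ε : ℝ) (hε : 0 < ε) (x₀ : E)
    (hEI : Integrable (fun x => Real.exp (ε * dist x x₀ ^ p)) μ) :
    ∃ C : ℝ, ∀ ν : Measure E, IsProbabilityMeasure ν →
      Wcost p ν μ ≤
        ENNReal.ofReal C * (relEnt ν μ + relEnt ν μ ^ (1 / 2 : ℝ)) :=
  bolley_villani_general μ hprob p hp ε hε x₀ hEI

end
end
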